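/- The double series Σ_{k≥1} Σ_{N≥k} N · S(N,k) (1−1/e)^{N−1}/(N−1)! · e^{−(k+1)} converges and equals c_3 · d_3, where c_3 = e^{−1} e^{−1/e} e^{(e^{1−1/e}−1)/e} and d_3 = 2 − 1/e + (1/e)(1 − 1/e) e^{1−1/e}. -/

import Mathlib

open scoped Nat

/-- Stirling numbers of the second kind. -/
def stirling : ℕ → ℕ → ℕ
  | 0, 0 => 1
  | 0, _ + 1 => 0
  | _ + 1, 0 => 0
  | n + 1, k + 1 => (k + 1) * stirling n (k + 1) + stirling n k

/-!
Dobinski's formula `∑ₖ S(N,k) βᵏ = e^{-β} ∑ⱼ jᴺ βʲ / j!`, a consequence of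
`jᴺ = ∑ₖ S(N,k) j(j-1)⋯(j-k+1)`, turns the series into a double series over `(N, j)` with
nonnegative terms, so the order of summation is free. Summing over `N` first gives
`βʲ/j! · j(1 + jx)e^{jx}`; summing that over `j` leaves the first two moments `∑ⱼ jⁱ yʲ/j!`
(`i = 1, 2`) at `y = βeˣ`, which Dobinski's formula evaluates once more. With `x = 1 - 1/e` and
`β = 1/e` the result is `c₃ d₃`.
-/

open Finset Nat Real

theorem stirling_eq_stirlingSecond : stirling = stirlingSecond := by
  funext n k
  induction n generalizing k with
  | zero => cases k <;> rfl
  | succ n ih => cases k <;> simp [stirling, stirlingSecond, ih]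

theorem Nat.descFactorial_mul_self (n k : ℕ) :
    n.descFactorial k * n = n.descFactorial (k + 1) + k * n.descFactorial k := by
  rcases le_or_gt k n with hk | hk
  · rw [descFactorial_succ]
    nth_rw 2 [← Nat.sub_add_cancel hk]
    ring
  · simp [descFactorial_eq_zero_iff_lt.2 hk]

theorem Nat.pow_eq_sum_stirlingSecond_mul_descFactorial (n N : ℕ) :
    n ^ N = ∑ k ∈ range (N + 1), stirlingSecond N k * n.descFactorial k := by
  induction N with
  | zero => simp
  | succ N ih =>
    have hshift : ∑ k ∈ range (N + 1), stirlingSecond N k * (k * n.descFactorial k) =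
        ∑ k ∈ range (N + 1), (k + 1) * stirlingSecond N (k + 1) * n.descFactorial (k + 1) := by
      have h := sum_range_succ' (fun k => k * stirlingSecond N k * n.descFactorial k) (N + 1)
      rw [sum_range_succ, stirlingSecond_eq_zero_of_lt N.lt_succ_self] at h
      simp only [mul_zero, zero_mul, add_zero] at h
      rw [← h]
      exact sum_congr rfl fun k _ => by ring
    rw [pow_succ, ih, sum_mul, sum_range_succ' _ (N + 1)]
    simp only [mul_assoc, descFactorial_mul_self, mul_add, sum_add_distrib, hshift,
      stirlingSecond_succ_succ, stirlingSecond_succ_zero, zero_mul, add_zero, add_mul]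
    ring

theorem Nat.mul_stirlingSecond_eq_zero {N k : ℕ} (h : ¬(1 ≤ k ∧ k ≤ N)) :
    N * stirlingSecond N k = 0 := by
  rcases N with _ | N
  · simp
  · rcases k with _ | k
    · simp
    · simp [stirlingSecond_eq_zero_of_lt (by omega : N + 1 < k + 1)]

theorem hasSum_prod_of_nonneg {α β : Type*} {f : α × β → ℝ} (hf : 0 ≤ f) {g : α → ℝ} {a : ℝ}
    (hfiber : ∀ b, HasSum (fun c => f (b, c)) (g b)) (hg : HasSum g a) : HasSum f a := by
  have hsum : Summable f := (summable_prod_of_nonneg hf).2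
    ⟨fun b => (hfiber b).summable, by simpa only [(hfiber _).tsum_eq] using hg.summable⟩
  rw [hsum.hasSum_iff, hsum.tsum_prod' fun b => (hfiber b).summable]
  simpa only [(hfiber _).tsum_eq] using hg.tsum_eq

theorem Real.hasSum_pow_div_factorial (x : ℝ) : HasSum (fun n => x ^ n / n !) (exp x) := by
  rw [exp_eq_exp_ℝ]
  exact NormedSpace.expSeries_div_hasSum_exp x

theorem Real.hasSum_descFactorial_mul_pow_div_factorial (k : ℕ) (t : ℝ) :
    HasSum (fun n => (n.descFactorial k : ℝ) * t ^ n / n !) (t ^ k * exp t) := by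
  rw [← hasSum_nat_add_iff' k]
  have hlow : ∑ n ∈ range k, (n.descFactorial k : ℝ) * t ^ n / n ! = 0 :=
    sum_eq_zero fun n hn => by simp [descFactorial_eq_zero_iff_lt.2 (mem_range.1 hn)]
  rw [hlow, sub_zero]
  refine ((hasSum_pow_div_factorial t).mul_left (t ^ k)).congr_fun fun n => ?_
  have hfact := factorial_mul_descFactorial (Nat.le_add_left k n)
  rw [Nat.add_sub_cancel] at hfact
  rw [← hfact]
  push_cast
  field_simp
  ring

noncomputable def touchard (N : ℕ) (t : ℝ) : ℝ :=
  ∑ k ∈ range (N + 1), (stirlingSecond N k : ℝ) * t ^ k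

theorem touchard_one (t : ℝ) : touchard 1 t = t := by
  simp [touchard, sum_range_succ, stirlingSecond_self]

theorem touchard_two (t : ℝ) : touchard 2 t = t + t ^ 2 := by
  simp [touchard, sum_range_succ, stirlingSecond]

/-- Dobinski's formula. -/
theorem Real.hasSum_pow_mul_pow_div_factorial (N : ℕ) (t : ℝ) :
    HasSum (fun n : ℕ => (n : ℝ) ^ N * t ^ n / n !) (touchard N t * exp t) := by
  have hterm : ∀ n : ℕ, (n : ℝ) ^ N * t ^ n / n ! =
      ∑ k ∈ range (N + 1), (stirlingSecond N k : ℝ) * ((n.descFactorial k : ℝ) * t ^ n / n !) := by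
    intro n
    rw [← Nat.cast_pow, pow_eq_sum_stirlingSecond_mul_descFactorial, Nat.cast_sum, sum_mul, sum_div]
    exact sum_congr rfl fun k _ => by push_cast; ring
  rw [touchard, sum_mul, funext hterm]
  simp_rw [mul_assoc]
  exact hasSum_sum fun k _ =>
    (hasSum_descFactorial_mul_pow_div_factorial k t).mul_left (stirlingSecond N k : ℝ)

theorem Real.hasSum_mul_pow_mul_pow_pred_div_factorial (t x : ℝ) :
    HasSum (fun n : ℕ => (n : ℝ) * t ^ n * x ^ (n - 1) / (n - 1)!)
      (t * (1 + t * x) * exp (t * x)) := by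
  rw [← hasSum_nat_add_iff' 1, sum_range_one]
  simp only [Nat.cast_zero, zero_mul, zero_div, sub_zero, Nat.add_sub_cancel]
  have h := ((hasSum_pow_div_factorial (t * x)).add
    (by simpa [touchard_one] using hasSum_pow_mul_pow_div_factorial 1 (t * x))).mul_left t
  rw [show t * (1 + t * x) * exp (t * x) = t * (exp (t * x) + t * x * exp (t * x)) by ring]
  refine h.congr_fun fun n => ?_
  push_cast
  ring

-- The value is `∂ₓ (x ∂ₓ exp (β (eˣ - 1)))`, the Touchard polynomials having exponential
-- generating function `exp (β (eˣ - 1))`.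
theorem hasSum_mul_pow_pred_div_factorial_mul_touchard (x β : ℝ) (hx : 0 ≤ x) (hβ : 0 ≤ β) :
    HasSum (fun N : ℕ => N * x ^ (N - 1) / (N - 1)! * touchard N β)
      (β * exp x * (1 + x + x * (β * exp x)) * exp (β * (exp x - 1))) := by
  set c : ℕ → ℝ := fun N => N * x ^ (N - 1) / (N - 1)!
  set y := β * exp x
  set V := (y + x * (y + y ^ 2)) * exp y
  have hfiber : ∀ j : ℕ, HasSum (fun N => c N * ((j : ℝ) ^ N * β ^ j / j !))
      (β ^ j / j ! * (j * (1 + j * x) * exp (j * x))) := fun j =>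
    ((hasSum_mul_pow_mul_pow_pred_div_factorial j x).mul_left (β ^ j / j !)).congr_fun
      fun N => by ring
  have hsum_fiber : HasSum (fun j : ℕ => β ^ j / j ! * (j * (1 + j * x) * exp (j * x))) V := by
    have h := (hasSum_pow_mul_pow_div_factorial 1 y).add
      ((hasSum_pow_mul_pow_div_factorial 2 y).mul_left x)
    rw [touchard_one, touchard_two] at h
    rw [show V = y * exp y + x * ((y + y ^ 2) * exp y) by ring]
    refine h.congr_fun fun j => ?_
    rw [mul_pow, ← exp_nat_mul]
    ring
  have hdouble : HasSum (fun p : ℕ × ℕ => c p.2 * ((p.1 : ℝ) ^ p.2 * β ^ p.1 / p.1 !)) V :=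
    hasSum_prod_of_nonneg (fun p => by positivity) hfiber hsum_fiber
  have hsum : HasSum (fun N => c N * (touchard N β * exp β)) V :=
    ((Equiv.prodComm ℕ ℕ).hasSum_iff.mpr hdouble).prod_fiberwise
      fun N => (hasSum_pow_mul_pow_div_factorial N β).mul_left (c N)
  have hval : V * exp (-β) = β * exp x * (1 + x + x * (β * exp x)) * exp (β * (exp x - 1)) := by
    rw [show β * (exp x - 1) = y + -β by ring, exp_add]
    ring
  rw [← hval]
  refine (hsum.mul_right (exp (-β))).congr_fun fun N => ?_
  rw [mul_assoc, mul_assoc, ← exp_add, add_neg_cancel, exp_zero, mul_one]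

theorem hasSum_stirlingSecond_double_series (x β : ℝ) (hx : 0 ≤ x) (hβ : 0 ≤ β) :
    HasSum (fun p : ℕ × ℕ =>
        (p.2 : ℝ) * stirlingSecond p.2 p.1 * x ^ (p.2 - 1) / (p.2 - 1)! * β ^ p.1)
      (β * exp x * (1 + x + x * (β * exp x)) * exp (β * (exp x - 1))) := by
  have hfiber : ∀ N : ℕ, HasSum (fun k => (N : ℝ) * stirlingSecond N k * x ^ (N - 1) / (N - 1)! *
      β ^ k) (N * x ^ (N - 1) / (N - 1)! * touchard N β) := by
    intro N
    rw [touchard, mul_sum]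
    refine (hasSum_sum_of_ne_finset_zero fun k hk => ?_).congr_fun fun k => ?_
    · simp [stirlingSecond_eq_zero_of_lt (by simpa using hk : N < k)]
    · ring
  have hswap : HasSum (fun p : ℕ × ℕ =>
      (p.1 : ℝ) * stirlingSecond p.1 p.2 * x ^ (p.1 - 1) / (p.1 - 1)! * β ^ p.2) _ :=
    hasSum_prod_of_nonneg (fun p => by positivity) hfiber
      (hasSum_mul_pow_pred_div_factorial_mul_touchard x β hx hβ)
  exact (Equiv.prodComm ℕ ℕ).hasSum_iff.mp hswap

/-- The double series `∑_{k≥1} ∑_{N≥k} N·S(N,k)(1−1/e)^{N−1}/(N−1)!·e^{−(k+1)}`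
converges, with sum `c₃·d₃`. Here `p = (k, N)`. -/
theorem stmt_17 :
    Summable (fun p : ℕ × ℕ =>
      if 1 ≤ p.1 ∧ p.1 ≤ p.2 then
        (p.2 : ℝ) * (stirling p.2 p.1 : ℝ) *
          (1 - 1 / Real.exp 1) ^ (p.2 - 1) / ((p.2 - 1)! : ℝ) *
          Real.exp (-((p.1 : ℝ) + 1))
      else 0) ∧
    ∑' p : ℕ × ℕ,
        (if 1 ≤ p.1 ∧ p.1 ≤ p.2 then
          (p.2 : ℝ) * (stirling p.2 p.1 : ℝ) *
            (1 - 1 / Real.exp 1) ^ (p.2 - 1) / ((p.2 - 1)! : ℝ) *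
            Real.exp (-((p.1 : ℝ) + 1))
        else 0) =
      (Real.exp (-1) * Real.exp (-(1 / Real.exp 1)) *
          Real.exp ((Real.exp (1 - 1 / Real.exp 1) - 1) / Real.exp 1)) *
        (2 - 1 / Real.exp 1 +
          (1 / Real.exp 1) * (1 - 1 / Real.exp 1) * Real.exp (1 - 1 / Real.exp 1)) := by
  set x := 1 - 1 / exp 1
  set β := exp (-1)
  have hβ : 1 / exp 1 = β := by rw [one_div, ← exp_neg]
  have hx : x = 1 - β := by rw [← hβ]
  have hx_nonneg : 0 ≤ x := by
    have : β ≤ 1 := exp_le_one_iff.2 (by norm_num)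
    linarith
  have hterm : ∀ p : ℕ × ℕ, (if 1 ≤ p.1 ∧ p.1 ≤ p.2 then
        (p.2 : ℝ) * (stirling p.2 p.1 : ℝ) * x ^ (p.2 - 1) / ((p.2 - 1)! : ℝ) *
          exp (-((p.1 : ℝ) + 1)) else 0) =
      β * ((p.2 : ℝ) * stirlingSecond p.2 p.1 * x ^ (p.2 - 1) / (p.2 - 1)! * β ^ p.1) := by
    rintro ⟨k, N⟩
    rw [stirling_eq_stirlingSecond]
    split_ifs with h
    · rw [show -((k : ℝ) + 1) = -1 + k * -1 by ring, exp_add, exp_nat_mul]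
      ring
    · simp [← Nat.cast_mul, mul_stirlingSecond_eq_zero h]
  have hsum := (hasSum_stirlingSecond_double_series x β hx_nonneg (exp_pos _).le).mul_left β
  simp only [← hterm] at hsum
  refine ⟨hsum.summable, hsum.tsum_eq.trans ?_⟩
  have hβx : exp (-(1 / exp 1)) = β * exp x := by
    rw [← exp_add, hβ, hx]
    ring_nf
  rw [hβx, div_eq_mul_one_div (exp x - 1), hβ, mul_comm (exp x - 1)]
  linear_combination β ^ 2 * exp x * exp (β * (exp x - 1)) * hx
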